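/- For every dimension d ≥ 1 and all ε, γ > 0, the residual map G_{γ,ε} : ℝ^d × ℝ^d → ℝ^d defined by G_{γ,ε}(t, y) := t − P_{γ,ε}(t + γ·y) satisfies, for all t₁, t₂, y₁, y₂ ∈ ℝ^d, the Lipschitz estimate ‖G_{γ,ε}(t₁, y₁) − G_{γ,ε}(t₂, y₂)‖ ≤ 2·‖t₁ − t₂‖ + γ·‖y₁ − y₂‖; in particular the Lipschitz constant is independent of the regularization parameter ε. -/

import Mathlib

open Classical

/-- The proximity map of `γ` times the Huber-regularized Euclidean norm. -/
noncomputable def proxHuber {d : ℕ} (γ ε : ℝ) (t : EuclideanSpace ℝ (Fin d)) :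
    EuclideanSpace ℝ (Fin d) :=
  if t = 0 then 0 else (max (ε / (ε + γ)) (1 - γ / ‖t‖)) • t

/-- The residual map `G_{γ,ε}(t, y) = t − P_{γ,ε}(t + γ y)`. -/
noncomputable def residualHuber {d : ℕ} (γ ε : ℝ)
    (t y : EuclideanSpace ℝ (Fin d)) : EuclideanSpace ℝ (Fin d) :=
  t - proxHuber γ ε (t + γ • y)

/-! A radial map `x ↦ s(‖x‖) • x` with `0 ≤ s ≤ 1` is nonexpansive as soon as its radial profile
`r ↦ s r * r` is: for factors with `s u ≤ 1`, expanding the squares gives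
`‖s a - u b‖² = (s‖a‖ - u‖b‖)² + 2su(‖a‖‖b‖ - ⟪a, b⟫) ≤ (‖a‖ - ‖b‖)² + 2(‖a‖‖b‖ - ⟪a, b⟫) = ‖a - b‖²`.
The profile of the Huber proximity map is `r ↦ max (c r) (r - γ)` with `c = ε / (ε + γ) ∈ [0, 1]`,
a maximum of two 1-Lipschitz functions. The Lipschitz bound for the residual then follows from
the triangle inequality. -/

theorem norm_smul_sub_smul_le_of_abs_le {E : Type*} [NormedAddCommGroup E] [InnerProductSpace ℝ E]
    {s u : ℝ} (a b : E) (hsu : s * u ≤ 1)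
    (h : |s * ‖a‖ - u * ‖b‖| ≤ |‖a‖ - ‖b‖|) :
    ‖s • a - u • b‖ ≤ ‖a - b‖ := by
  have hsq : (s * ‖a‖ - u * ‖b‖) ^ 2 ≤ (‖a‖ - ‖b‖) ^ 2 := sq_le_sq.mpr h
  have hinner : inner ℝ a b ≤ ‖a‖ * ‖b‖ := real_inner_le_norm a b
  rw [← pow_le_pow_iff_left₀ (norm_nonneg _) (norm_nonneg _) two_ne_zero,
    norm_sub_sq_real, norm_sub_sq_real, norm_smul, norm_smul, real_inner_smul_left, real_inner_smul_right,
    Real.norm_eq_abs, Real.norm_eq_abs, mul_pow, mul_pow, sq_abs, sq_abs]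
  nlinarith [mul_nonneg (sub_nonneg.mpr hsu) (sub_nonneg.mpr hinner)]

theorem abs_max_mul_sub_max_sub_le {c : ℝ} (hc : |c| ≤ 1) (γ α β : ℝ) :
    |max (c * α) (α - γ) - max (c * β) (β - γ)| ≤ |α - β| := by
  refine (abs_max_sub_max_le_max _ _ _ _).trans (max_le ?_ ?_)
  · rw [← mul_sub, abs_mul]
    exact mul_le_of_le_one_left (abs_nonneg _) hc
  · rw [sub_sub_sub_cancel_right]

theorem div_add_mem_Icc {a b : ℝ} (ha : 0 ≤ a) (hb : 0 ≤ b) : a / (a + b) ∈ Set.Icc 0 1 :=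
  ⟨by positivity, div_le_one_of_le₀ (by linarith) (by linarith)⟩

noncomputable def proxHuberScale (γ ε r : ℝ) : ℝ :=
  max (ε / (ε + γ)) (1 - γ / r)

section proxHuber

variable {d : ℕ} {γ ε : ℝ}

theorem proxHuber_eq_smul (t : EuclideanSpace ℝ (Fin d)) :
    proxHuber γ ε t = proxHuberScale γ ε ‖t‖ • t := by
  unfold proxHuber proxHuberScale
  split_ifs with ht
  · simp [ht]
  · rfl

theorem proxHuberScale_mem_Icc (hε : 0 ≤ ε) (hγ : 0 ≤ γ) {r : ℝ} (hr : 0 ≤ r) :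
    proxHuberScale γ ε r ∈ Set.Icc 0 1 := by
  obtain ⟨hc₀, hc₁⟩ := div_add_mem_Icc hε hγ
  have hγr : 0 ≤ γ / r := by positivity
  exact ⟨hc₀.trans (le_max_left _ _), max_le hc₁ (by linarith)⟩

theorem proxHuberScale_mul_self (hγ : 0 ≤ γ) {r : ℝ} (hr : 0 ≤ r) :
    proxHuberScale γ ε r * r = max (ε / (ε + γ) * r) (r - γ) := by
  rw [proxHuberScale, max_mul_of_nonneg _ _ hr, one_sub_mul]
  rcases hr.eq_or_lt with rfl | hr
  · simp [hγ]
  · rw [div_mul_cancel₀ _ hr.ne']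

theorem norm_proxHuber_sub_le (hε : 0 ≤ ε) (hγ : 0 ≤ γ) (a b : EuclideanSpace ℝ (Fin d)) :
    ‖proxHuber γ ε a - proxHuber γ ε b‖ ≤ ‖a - b‖ := by
  have hs₁ := (proxHuberScale_mem_Icc hε hγ (norm_nonneg a)).2
  obtain ⟨hu₀, hu₁⟩ := proxHuberScale_mem_Icc hε hγ (norm_nonneg b)
  obtain ⟨hc₀, hc₁⟩ := div_add_mem_Icc hε hγ
  rw [proxHuber_eq_smul, proxHuber_eq_smul]
  refine norm_smul_sub_smul_le_of_abs_le a b (mul_le_one₀ hs₁ hu₀ hu₁) ?_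
  rw [proxHuberScale_mul_self hγ (norm_nonneg a), proxHuberScale_mul_self hγ (norm_nonneg b)]
  exact abs_max_mul_sub_max_sub_le (abs_le.mpr ⟨by linarith, hc₁⟩) γ _ _

end proxHuber

theorem residualHuber_lipschitz_general (d : ℕ) (ε γ : ℝ)
    (hε : 0 < ε) (hγ : 0 < γ) (t₁ t₂ y₁ y₂ : EuclideanSpace ℝ (Fin d)) :
    ‖residualHuber γ ε t₁ y₁ - residualHuber γ ε t₂ y₂‖
      ≤ 2 * ‖t₁ - t₂‖ + γ * ‖y₁ - y₂‖ := by
  have hsplit : residualHuber γ ε t₁ y₁ - residualHuber γ ε t₂ y₂ =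
      (t₁ - t₂) - (proxHuber γ ε (t₁ + γ • y₁) - proxHuber γ ε (t₂ + γ • y₂)) := by
    simp only [residualHuber]; abel
  have hshift : ‖(t₁ + γ • y₁) - (t₂ + γ • y₂)‖ ≤ ‖t₁ - t₂‖ + γ * ‖y₁ - y₂‖ := by
    rw [add_sub_add_comm, ← smul_sub]
    refine (norm_add_le _ _).trans_eq ?_
    rw [norm_smul, Real.norm_of_nonneg hγ.le]
  calc ‖residualHuber γ ε t₁ y₁ - residualHuber γ ε t₂ y₂‖
      ≤ ‖t₁ - t₂‖ + ‖proxHuber γ ε (t₁ + γ • y₁) - proxHuber γ ε (t₂ + γ • y₂)‖ := by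
        rw [hsplit]; exact norm_sub_le _ _
    _ ≤ ‖t₁ - t₂‖ + (‖t₁ - t₂‖ + γ * ‖y₁ - y₂‖) := by
        grw [norm_proxHuber_sub_le hε.le hγ.le, hshift]
    _ = 2 * ‖t₁ - t₂‖ + γ * ‖y₁ - y₂‖ := by ring

/-- The residual map `G_{γ,ε}` is Lipschitz continuous with constants
independent of the regularization parameter `ε`:
`‖G(t₁,y₁) − G(t₂,y₂)‖ ≤ 2‖t₁ − t₂‖ + γ‖y₁ − y₂‖`. -/
theorem residualHuber_lipschitz (d : ℕ) (hd : 1 ≤ d) (ε γ : ℝ)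
    (hε : 0 < ε) (hγ : 0 < γ) (t₁ t₂ y₁ y₂ : EuclideanSpace ℝ (Fin d)) :
    ‖residualHuber γ ε t₁ y₁ - residualHuber γ ε t₂ y₂‖
      ≤ 2 * ‖t₁ - t₂‖ + γ * ‖y₁ - y₂‖ :=
  residualHuber_lipschitz_general d ε γ hε hγ t₁ t₂ y₁ y₂
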